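/- With the theta constants a₁(z),...,a₆(z) of order 13 as above, for all z in the upper half-plane: a₃(z)a₅(z)³ + a₁(z)³a₄(z) - a₁(z)a₂(z)³ = 0. -/
import Mathlib

open Complex

/-- Theta constant with characteristics `[ε; 1]` evaluated at `z = 0`:
`θ[ε;1](0,τ) = ∑_{n∈ℤ} exp(2πi·[½(n+ε/2)²τ + (n+ε/2)·(1/2)])`. -/
noncomputable def thetaChar (ε : ℝ) (τ : ℂ) : ℂ :=
  ∑' n : ℤ, Complex.exp (2 * Real.pi * Complex.I *
    ((1/2) * ((n : ℂ) + (ε : ℂ)/2)^2 * τ + ((n : ℂ) + (ε : ℂ)/2) * (1/2)))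

noncomputable def a₁ (z : ℂ) : ℂ :=
  Complex.exp (-(11 * Real.pi * Complex.I) / 26) * thetaChar (11/13) (13*z)
noncomputable def a₂ (z : ℂ) : ℂ :=
  Complex.exp (-(7 * Real.pi * Complex.I) / 26) * thetaChar (7/13) (13*z)
noncomputable def a₃ (z : ℂ) : ℂ :=
  Complex.exp (-(5 * Real.pi * Complex.I) / 26) * thetaChar (5/13) (13*z)
noncomputable def a₄ (z : ℂ) : ℂ :=
  -Complex.exp (-(3 * Real.pi * Complex.I) / 26) * thetaChar (3/13) (13*z)
noncomputable def a₅ (z : ℂ) : ℂ :=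
  Complex.exp (-(9 * Real.pi * Complex.I) / 26) * thetaChar (9/13) (13*z)
noncomputable def a₆ (z : ℂ) : ℂ :=
  Complex.exp (-(Real.pi * Complex.I) / 26) * thetaChar (1/13) (13*z)

/-! ### Auxiliary machinery -/

noncomputable def Fc (z : ℂ) (l : ℤ) (n : ℤ) : ℂ :=
  (-1 : ℂ)^n * Complex.exp (Real.pi * Complex.I * z / 52 * (((26*n + l : ℤ) : ℂ))^2)

lemma neg_one_zpow_int' (n : ℤ) : (-1 : ℂ)^n = Complex.exp ((n : ℂ) * (Real.pi * Complex.I)) := by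
  rw [Complex.exp_int_mul, Complex.exp_pi_mul_I]

lemma a_eq (z : ℂ) (l : ℤ) :
    Complex.exp (-((l : ℂ) * Real.pi * Complex.I) / 26) * thetaChar ((l : ℝ)/13) (13*z)
      = ∑' n : ℤ, Fc z l n := by
  rw [thetaChar, ← tsum_mul_left]
  congr 1; funext n
  rw [Fc, neg_one_zpow_int', ← Complex.exp_add, ← Complex.exp_add]
  congr 1
  push_cast
  ring

lemma Fc_eq_jacobi (z : ℂ) (l : ℤ) (n : ℤ) :
    Fc z l n = Complex.exp (Real.pi * Complex.I * z / 52 * (l : ℂ)^2) *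
      jacobiTheta₂_term n (((l : ℂ)*z+1)/2) (13*z) := by
  rw [Fc, jacobiTheta₂_term, neg_one_zpow_int', ← Complex.exp_add, ← Complex.exp_add]
  congr 1
  push_cast
  ring

lemma Fc_norm_summable {z : ℂ} (hz : 0 < z.im) (l : ℤ) :
    Summable fun n : ℤ => ‖Fc z l n‖ := by
  have h13 : (0:ℝ) < (13*z).im := by
    have : (13*z).im = 13 * z.im := by simp [Complex.mul_im]
    rw [this]; linarith
  simp only [Fc_eq_jacobi, norm_mul]
  apply Summable.mul_left
  refine (summable_pow_mul_jacobiTheta₂_term_bound |((((l:ℂ))*z+1)/2).im| h13 0).of_nonneg_of_le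
    (fun _ => norm_nonneg _) (fun n => ?_)
  simpa only [pow_zero, one_mul] using norm_jacobiTheta₂_term_le h13 le_rfl le_rfl n

noncomputable def Hq (z : ℂ) (l₁ l₂ l₃ l₄ : ℤ) (p : (ℤ×ℤ)×(ℤ×ℤ)) : ℂ :=
  (Fc z l₁ p.1.1 * Fc z l₂ p.1.2) * (Fc z l₃ p.2.1 * Fc z l₄ p.2.2)

def σp (p : (ℤ×ℤ)×(ℤ×ℤ)) : ℤ := p.1.1 + p.1.2 + p.2.1 + p.2.2

lemma Hq_norm_summable {z : ℂ} (hF : ∀ l : ℤ, Summable fun n : ℤ => ‖Fc z l n‖)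
    (l₁ l₂ l₃ l₄ : ℤ) : Summable fun p : (ℤ×ℤ)×(ℤ×ℤ) => ‖Hq z l₁ l₂ l₃ l₄ p‖ := by
  have h := ((hF l₁).mul_norm (hF l₂)).mul_norm ((hF l₃).mul_norm (hF l₄))
  simp only [Hq]
  exact h

lemma prod4_eq {z : ℂ} (hF : ∀ l : ℤ, Summable fun n : ℤ => ‖Fc z l n‖) (l₁ l₂ l₃ l₄ : ℤ) :
    (∑' n : ℤ, Fc z l₁ n) * (∑' n : ℤ, Fc z l₂ n) *
      ((∑' n : ℤ, Fc z l₃ n) * (∑' n : ℤ, Fc z l₄ n))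
      = ∑' p : (ℤ×ℤ)×(ℤ×ℤ), Hq z l₁ l₂ l₃ l₄ p := by
  rw [tsum_mul_tsum_of_summable_norm (hF l₁) (hF l₂),
    tsum_mul_tsum_of_summable_norm (hF l₃) (hF l₄),
    tsum_mul_tsum_of_summable_norm ((hF l₁).mul_norm (hF l₂)) ((hF l₃).mul_norm (hF l₄))]
  rfl

lemma mul4 (a b c d : ℤ) (A B C D : ℂ) :
    ((-1:ℂ)^a * Complex.exp A) * ((-1:ℂ)^b * Complex.exp B) *
      (((-1:ℂ)^c * Complex.exp C) * ((-1:ℂ)^d * Complex.exp D))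
      = (-1:ℂ)^(a+b+c+d) * Complex.exp (A+B+C+D) := by
  have h : (-1:ℂ) ≠ 0 := by norm_num
  rw [zpow_add₀ h, zpow_add₀ h, zpow_add₀ h, Complex.exp_add, Complex.exp_add, Complex.exp_add]
  ring

lemma Hq_eq (z : ℂ) (l₁ l₂ l₃ l₄ : ℤ) (p : (ℤ×ℤ)×(ℤ×ℤ)) :
    Hq z l₁ l₂ l₃ l₄ p = (-1:ℂ)^(σp p) * Complex.exp (Real.pi * Complex.I * z / 52 *
      (((26*p.1.1+l₁)^2 + (26*p.1.2+l₂)^2 + (26*p.2.1+l₃)^2 + (26*p.2.2+l₄)^2 : ℤ) : ℂ)) := by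
  rw [Hq, Fc, Fc, Fc, Fc, mul4, σp]
  congr 1
  push_cast
  ring

lemma neg_one_zpow_congr {a b : ℤ} (h : (a - b) % 2 = 0) : (-1:ℂ)^a = (-1:ℂ)^b := by
  obtain ⟨k, hk⟩ : ∃ k, a = b + 2*k := ⟨(a-b)/2, by omega⟩
  subst hk
  rw [zpow_add₀ (by norm_num : (-1:ℂ) ≠ 0), zpow_mul]
  norm_num

lemma neg_one_zpow_anticongr {a b : ℤ} (h : (a - b) % 2 ≠ 0) : (-1:ℂ)^a = -(-1:ℂ)^b := by
  obtain ⟨k, hk⟩ : ∃ k, a = b + (2*k + 1) := ⟨(a-b-1)/2, by omega⟩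
  subst hk
  rw [zpow_add₀ (by norm_num : (-1:ℂ) ≠ 0), zpow_add₀ (by norm_num : (-1:ℂ) ≠ 0), zpow_mul]
  norm_num

def mapA (p : (ℤ×ℤ)×(ℤ×ℤ)) : (ℤ×ℤ)×(ℤ×ℤ) :=
  ((σp p / 2 - p.1.1, σp p / 2 - p.1.2), (σp p / 2 - p.2.1, σp p / 2 - p.2.2))

def mapB (p : (ℤ×ℤ)×(ℤ×ℤ)) : (ℤ×ℤ)×(ℤ×ℤ) :=
  ((p.1.1 - (p.1.1 + p.1.2 + p.2.1 - p.2.2 - 1) / 2 - 1,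
    (p.1.1 + p.1.2 + p.2.1 - p.2.2 - 1) / 2 - p.1.2),
   ((p.1.1 + p.1.2 + p.2.1 - p.2.2 - 1) / 2 - p.2.1,
    (p.1.1 + p.1.2 + p.2.1 - p.2.2 - 1) / 2 + p.2.2 + 1))

def mapBinv (k : (ℤ×ℤ)×(ℤ×ℤ)) : (ℤ×ℤ)×(ℤ×ℤ) :=
  ((k.1.1 + (-k.1.1 + k.1.2 + k.2.1 + k.2.2 - 1) / 2 + 1,
    (-k.1.1 + k.1.2 + k.2.1 + k.2.2 - 1) / 2 - k.1.2),
   ((-k.1.1 + k.1.2 + k.2.1 + k.2.2 - 1) / 2 - k.2.1,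
    k.2.2 - (-k.1.1 + k.1.2 + k.2.1 + k.2.2 - 1) / 2 - 1))

def mapC (p : (ℤ×ℤ)×(ℤ×ℤ)) : (ℤ×ℤ)×(ℤ×ℤ) :=
  (((-p.1.1 + p.1.2 + p.2.1 + p.2.2 - 1) / 2 - p.1.2,
    (-p.1.1 + p.1.2 + p.2.1 + p.2.2 - 1) / 2 - p.2.1),
   ((-p.1.1 + p.1.2 + p.2.1 + p.2.2 - 1) / 2 - p.2.2,
    (-p.1.1 + p.1.2 + p.2.1 + p.2.2 - 1) / 2 + p.1.1 + 1))

def mapCinv (k : (ℤ×ℤ)×(ℤ×ℤ)) : (ℤ×ℤ)×(ℤ×ℤ) :=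
  ((k.2.2 - σp k / 2 - 1, σp k / 2 - k.1.1), (σp k / 2 - k.1.2, σp k / 2 - k.2.1))

abbrev ES : Type := {p : (ℤ×ℤ)×(ℤ×ℤ) // σp p % 2 = 0}
abbrev OS : Type := {p : (ℤ×ℤ)×(ℤ×ℤ) // ¬ (σp p % 2 = 0)}

def ΦA : ES ≃ ES where
  toFun x := ⟨mapA x.1, by obtain ⟨⟨⟨a,b⟩,⟨c,d⟩⟩, h⟩ := x; simp [mapA, σp] at h ⊢; omega⟩
  invFun x := ⟨mapA x.1, by obtain ⟨⟨⟨a,b⟩,⟨c,d⟩⟩, h⟩ := x; simp [mapA, σp] at h ⊢; omega⟩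
  left_inv x := by
    obtain ⟨⟨⟨a,b⟩,⟨c,d⟩⟩, h⟩ := x
    apply Subtype.ext
    simp [mapA, σp, Prod.ext_iff] at h ⊢
    omega
  right_inv x := by
    obtain ⟨⟨⟨a,b⟩,⟨c,d⟩⟩, h⟩ := x
    apply Subtype.ext
    simp [mapA, σp, Prod.ext_iff] at h ⊢
    omega

def ΦB : OS ≃ OS where
  toFun x := ⟨mapB x.1, by obtain ⟨⟨⟨a,b⟩,⟨c,d⟩⟩, h⟩ := x; simp [mapB, σp] at h ⊢; omega⟩
  invFun x := ⟨mapBinv x.1, by obtain ⟨⟨⟨a,b⟩,⟨c,d⟩⟩, h⟩ := x; simp [mapBinv, σp] at h ⊢; omega⟩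
  left_inv x := by
    obtain ⟨⟨⟨a,b⟩,⟨c,d⟩⟩, h⟩ := x
    apply Subtype.ext
    simp [mapB, mapBinv, σp, Prod.ext_iff] at h ⊢
    omega
  right_inv x := by
    obtain ⟨⟨⟨a,b⟩,⟨c,d⟩⟩, h⟩ := x
    apply Subtype.ext
    simp [mapB, mapBinv, σp, Prod.ext_iff] at h ⊢
    omega

def ΦC : OS ≃ ES where
  toFun x := ⟨mapC x.1, by obtain ⟨⟨⟨a,b⟩,⟨c,d⟩⟩, h⟩ := x; simp [mapC, σp] at h ⊢; omega⟩
  invFun x := ⟨mapCinv x.1, by obtain ⟨⟨⟨a,b⟩,⟨c,d⟩⟩, h⟩ := x; simp [mapCinv, σp] at h ⊢; omega⟩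
  left_inv x := by
    obtain ⟨⟨⟨a,b⟩,⟨c,d⟩⟩, h⟩ := x
    apply Subtype.ext
    simp [mapC, mapCinv, σp, Prod.ext_iff] at h ⊢
    omega
  right_inv x := by
    obtain ⟨⟨⟨a,b⟩,⟨c,d⟩⟩, h⟩ := x
    apply Subtype.ext
    simp [mapC, mapCinv, σp, Prod.ext_iff] at h ⊢
    omega

lemma valA (z : ℂ) (a b c d : ℤ) (h : σp ((a,b),(c,d)) % 2 = 0) :
    Hq z 11 7 7 7 (mapA ((a,b),(c,d))) = Hq z 5 9 9 9 ((a,b),(c,d)) := by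
  simp only [σp] at h
  obtain ⟨e, he⟩ : ∃ e : ℤ, d = 2*e - a - b - c := ⟨(a+b+c+d)/2, by omega⟩
  subst he
  have h2 : mapA ((a,b),(c,(2*e - a - b - c))) = ((e-a, e-b),(e-c, e-(2*e-a-b-c))) := by
    simp only [mapA, σp]
    have : (a + b + c + (2*e - a - b - c)) / 2 = e := by omega
    rw [this]
  rw [h2, Hq_eq, Hq_eq]
  have hσ : (-1:ℂ)^(σp ((e-a, e-b),(e-c, e-(2*e-a-b-c))))
      = (-1:ℂ)^(σp ((a,b),(c,(2*e-a-b-c)))) := by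
    apply neg_one_zpow_congr
    simp only [σp]
    omega
  rw [hσ]
  congr 2
  push_cast
  ring

lemma valB (z : ℂ) (a b c d : ℤ) (h : ¬ (σp ((a,b),(c,d)) % 2 = 0)) :
    Hq z 11 11 11 3 (mapB ((a,b),(c,d))) = Hq z 5 9 9 9 ((a,b),(c,d)) := by
  simp only [σp] at h
  obtain ⟨e, he⟩ : ∃ e : ℤ, d = a + b + c - 2*e - 1 := ⟨(a+b+c-d-1)/2, by omega⟩
  subst he
  have h2 : mapB ((a,b),(c,(a + b + c - 2*e - 1)))
      = ((a-e-1, e-b),(e-c, e+(a + b + c - 2*e - 1)+1)) := by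
    simp only [mapB]
    have : (a + b + c - (a + b + c - 2*e - 1) - 1) / 2 = e := by omega
    rw [this]
  rw [h2, Hq_eq, Hq_eq]
  have hσ : (-1:ℂ)^(σp ((a-e-1, e-b),(e-c, e+(a + b + c - 2*e - 1)+1)))
      = (-1:ℂ)^(σp ((a,b),(c,(a + b + c - 2*e - 1)))) := by
    apply neg_one_zpow_congr
    simp only [σp]
    omega
  rw [hσ]
  congr 2
  push_cast
  ring

lemma valC (z : ℂ) (a b c d : ℤ) (h : ¬ (σp ((a,b),(c,d)) % 2 = 0)) :
    Hq z 11 11 11 3 (mapC ((a,b),(c,d))) = -Hq z 11 7 7 7 ((a,b),(c,d)) := by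
  simp only [σp] at h
  obtain ⟨e, he⟩ : ∃ e : ℤ, a = b + c + d - 2*e - 1 := ⟨(-a+b+c+d-1)/2, by omega⟩
  subst he
  have h2 : mapC (((b + c + d - 2*e - 1),b),(c,d))
      = ((e-b, e-c),(e-d, e+(b + c + d - 2*e - 1)+1)) := by
    simp only [mapC]
    have : (-(b + c + d - 2*e - 1) + b + c + d - 1) / 2 = e := by omega
    rw [this]
  rw [h2, Hq_eq, Hq_eq]
  have hσ : (-1:ℂ)^(σp ((e-b, e-c),(e-d, e+(b + c + d - 2*e - 1)+1)))
      = -(-1:ℂ)^(σp (((b + c + d - 2*e - 1),b),(c,d))) := by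
    apply neg_one_zpow_anticongr
    simp only [σp]
    omega
  rw [hσ]
  have hE : Complex.exp (Real.pi * Complex.I * z / 52 *
        (((26*(e-b)+11)^2 + (26*(e-c)+11)^2 + (26*(e-d)+11)^2
          + (26*(e+(b + c + d - 2*e - 1)+1)+3)^2 : ℤ) : ℂ))
      = Complex.exp (Real.pi * Complex.I * z / 52 *
        (((26*(b + c + d - 2*e - 1)+11)^2 + (26*b+7)^2 + (26*c+7)^2 + (26*d+7)^2 : ℤ) : ℂ)) := by
    congr 1
    push_cast
    ring
  rw [hE]
  ring

theorem modular_equation_B1_1 (z : ℂ) (hz : 0 < z.im) :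
    a₃ z * (a₅ z)^3 + (a₁ z)^3 * a₄ z - a₁ z * (a₂ z)^3 = 0 := by
  have hF : ∀ l : ℤ, Summable fun n : ℤ => ‖Fc z l n‖ := Fc_norm_summable hz
  -- series representations
  have ha1 : a₁ z = ∑' n : ℤ, Fc z 11 n := by
    have := a_eq z 11; rw [a₁]
    push_cast at this ⊢
    convert this using 4
  have ha2 : a₂ z = ∑' n : ℤ, Fc z 7 n := by
    have := a_eq z 7; rw [a₂]
    push_cast at this ⊢
    convert this using 4
  have ha3 : a₃ z = ∑' n : ℤ, Fc z 5 n := by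
    have := a_eq z 5; rw [a₃]
    push_cast at this ⊢
    convert this using 4
  have ha4 : a₄ z = -∑' n : ℤ, Fc z 3 n := by
    have := a_eq z 3; rw [a₄]
    push_cast at this ⊢
    rw [neg_mul, ← this]
  have ha5 : a₅ z = ∑' n : ℤ, Fc z 9 n := by
    have := a_eq z 9; rw [a₅]
    push_cast at this ⊢
    convert this using 4
  -- products as quadruple sums
  have h: ∀ l₁ l₂ l₃ l₄ : ℤ, Summable (Hq z l₁ l₂ l₃ l₄) :=
    fun l₁ l₂ l₃ l₄ => (Hq_norm_summable hF l₁ l₂ l₃ l₄).of_norm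
  have hP1 : a₃ z * (a₅ z)^3 = ∑' p : (ℤ×ℤ)×(ℤ×ℤ), Hq z 5 9 9 9 p := by
    rw [ha3, ha5, ← prod4_eq hF 5 9 9 9]; ring
  have hP2 : (a₁ z)^3 * a₄ z = -∑' p : (ℤ×ℤ)×(ℤ×ℤ), Hq z 11 11 11 3 p := by
    rw [ha1, ha4, ← prod4_eq hF 11 11 11 3]; ring
  have hP3 : a₁ z * (a₂ z)^3 = ∑' p : (ℤ×ℤ)×(ℤ×ℤ), Hq z 11 7 7 7 p := by
    rw [ha1, ha2, ← prod4_eq hF 11 7 7 7]; ring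
  -- split by parity
  set s : Set ((ℤ×ℤ)×(ℤ×ℤ)) := {p | σp p % 2 = 0} with hs
  have split : ∀ l₁ l₂ l₃ l₄ : ℤ, (∑' p : (ℤ×ℤ)×(ℤ×ℤ), Hq z l₁ l₂ l₃ l₄ p)
      = (∑' p : ES, Hq z l₁ l₂ l₃ l₄ p) + (∑' p : OS, Hq z l₁ l₂ l₃ l₄ p) := by
    intro l₁ l₂ l₃ l₄
    exact (Summable.tsum_add_tsum_compl ((h l₁ l₂ l₃ l₄).subtype s) ((h l₁ l₂ l₃ l₄).subtype sᶜ)).symm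
  -- the three cancellations
  have eA : (∑' p : ES, Hq z 5 9 9 9 (p : (ℤ×ℤ)×(ℤ×ℤ)))
      = ∑' p : ES, Hq z 11 7 7 7 (p : (ℤ×ℤ)×(ℤ×ℤ)) := by
    rw [← ΦA.tsum_eq (fun p : ES => Hq z 11 7 7 7 (p : (ℤ×ℤ)×(ℤ×ℤ)))]
    congr 1; funext x
    obtain ⟨⟨⟨a,b⟩,⟨c,d⟩⟩, hx⟩ := x
    exact (valA z a b c d hx).symm
  have eB : (∑' p : OS, Hq z 5 9 9 9 (p : (ℤ×ℤ)×(ℤ×ℤ)))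
      = ∑' p : OS, Hq z 11 11 11 3 (p : (ℤ×ℤ)×(ℤ×ℤ)) := by
    rw [← ΦB.tsum_eq (fun p : OS => Hq z 11 11 11 3 (p : (ℤ×ℤ)×(ℤ×ℤ)))]
    congr 1; funext x
    obtain ⟨⟨⟨a,b⟩,⟨c,d⟩⟩, hx⟩ := x
    exact (valB z a b c d hx).symm
  have eC : (∑' p : OS, Hq z 11 7 7 7 (p : (ℤ×ℤ)×(ℤ×ℤ)))
      = -∑' p : ES, Hq z 11 11 11 3 (p : (ℤ×ℤ)×(ℤ×ℤ)) := by
    rw [← ΦC.tsum_eq (fun p : ES => Hq z 11 11 11 3 (p : (ℤ×ℤ)×(ℤ×ℤ)))]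
    rw [← tsum_neg]
    congr 1; funext x
    obtain ⟨⟨⟨a,b⟩,⟨c,d⟩⟩, hx⟩ := x
    have := valC z a b c d hx
    simp only [ΦC, Equiv.coe_fn_mk]
    rw [this]
    ring
  rw [hP1, hP2, hP3, split 5 9 9 9, split 11 11 11 3, split 11 7 7 7, eA, eB, eC]
  ring
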